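/- arXiv:0803.1133 — 2 statements merged into one kernel-verified Lean document; each statement's English description precedes it below -/
import Mathlib

section
/- Let V be an n-dimensional vector space over a division ring and 1 ≤ k ≤ n-1. In the Grassmann graph on G_k(V) (vertices: k-dimensional subspaces; edges: adjacent pairs), the graph is connected and the distance between S, U ∈ G_k(V) equals k - dim(S ∩ U). -/
/-- The Grassmann graph: vertices are the k-dimensional subspaces of V,
with S and U adjacent iff they are distinct and dim(S ∩ U) = k - 1. -/
def grassmannGraph (K V : Type*) [DivisionRing K] [AddCommGroup V] [Module K V]
    (k : ℕ) : SimpleGraph {S : Submodule K V // Module.finrank K S = k} where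
  Adj S U := S ≠ U ∧ Module.finrank K ↥(S.1 ⊓ U.1) = k - 1
  symm := by
    constructor
    rintro S U ⟨h1, h2⟩
    exact ⟨h1.symm, by rwa [inf_comm]⟩
  loopless := by
    constructor
    rintro S ⟨h, -⟩
    exact h rfl

/-!
Along any edge S ~ W the dimension of the intersection with a fixed U grows by at most one,
since dim (W ∩ U) + dim (S ∩ W) ≤ dim W + dim (S ∩ U); so every walk from S to U has length at
least k - dim (S ∩ U). Conversely, for S ≠ U pick v ∈ U \ S and a hyperplane H of S containing
S ∩ U: then W = H + ⟨v⟩ is adjacent to S and meets U in dimension one more, which yields a walk of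
exactly that length.
-/

open Module Submodule SimpleGraph

namespace Submodule

variable {K V : Type*} [DivisionRing K] [AddCommGroup V] [Module K V] [FiniteDimensional K V]

theorem exists_le_le_finrank_eq {N U : Submodule K V} (hNU : N ≤ U) {m : ℕ}
    (hN : finrank K N ≤ m) (hU : m ≤ finrank K U) :
    ∃ X : Submodule K V, N ≤ X ∧ X ≤ U ∧ finrank K X = m := by
  induction m, hN using Nat.le_induction with
  | base => exact ⟨N, le_rfl, hNU, rfl⟩
  | succ m _ ih =>
    obtain ⟨X, hNX, hXU, hX⟩ := ih (by omega)
    obtain ⟨v, hvU, hvX⟩ : ∃ v ∈ U, v ∉ X :=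
      SetLike.not_le_iff_exists.mp fun hUX => by have := finrank_mono hUX; omega
    refine ⟨X ⊔ K ∙ v, hNX.trans le_sup_left,
      sup_le hXU ((span_singleton_le_iff_mem _ _).mpr hvU), ?_⟩
    rw [finrank_sup_span_singleton hvX, hX]

theorem finrank_inf_add_finrank_inf_le (S W U : Submodule K V) :
    finrank K ↥(W ⊓ U) + finrank K ↥(S ⊓ W) ≤ finrank K W + finrank K ↥(S ⊓ U) := by
  have hsup : (W ⊓ U) ⊔ (S ⊓ W) ≤ W := sup_le inf_le_left inf_le_right
  have hinf : (W ⊓ U) ⊓ (S ⊓ W) ≤ S ⊓ U :=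
    le_inf (inf_le_right.trans inf_le_left) (inf_le_left.trans inf_le_right)
  rw [← finrank_sup_add_finrank_inf_eq]
  exact add_le_add (finrank_mono hsup) (finrank_mono hinf)

end Submodule

namespace grassmannGraph

variable {K V : Type*} [DivisionRing K] [AddCommGroup V] [Module K V] [FiniteDimensional K V]
  {k : ℕ}

theorem eq_of_le {S U : {S : Submodule K V // finrank K S = k}} (h : S.1 ≤ U.1) : S = U :=
  Subtype.ext (eq_of_le_of_finrank_eq h (S.2.trans U.2.symm))

theorem finrank_inf_le (S U : {S : Submodule K V // finrank K S = k}) :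
    finrank K ↥(S.1 ⊓ U.1) ≤ k :=
  (finrank_mono inf_le_left).trans_eq S.2

theorem finrank_inf_lt {S U : {S : Submodule K V // finrank K S = k}} (h : S ≠ U) :
    finrank K ↥(S.1 ⊓ U.1) < k :=
  (finrank_lt_finrank_of_lt (inf_lt_left.mpr fun hSU => h (eq_of_le hSU))).trans_eq S.2

theorem finrank_inf_le_succ_of_adj {S W : {S : Submodule K V // finrank K S = k}}
    (h : (grassmannGraph K V k).Adj S W) (U : {S : Submodule K V // finrank K S = k}) :
    finrank K ↥(W.1 ⊓ U.1) ≤ finrank K ↥(S.1 ⊓ U.1) + 1 := by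
  have key := finrank_inf_add_finrank_inf_le S.1 W.1 U.1
  rw [h.2, W.2] at key
  -- `k ≥ 1` because `S ≠ W`, so `k - 1` does not truncate
  have := finrank_inf_lt h.1
  omega

theorem le_finrank_inf_add_length {S U : {S : Submodule K V // finrank K S = k}}
    (p : (grassmannGraph K V k).Walk S U) :
    k ≤ finrank K ↥(S.1 ⊓ U.1) + p.length := by
  induction p with
  | @nil A => rw [inf_idem, A.2]; simp
  | @cons _ _ U h _ ih =>
    have := finrank_inf_le_succ_of_adj h U
    rw [Walk.length_cons]
    omega

theorem exists_adj_finrank_inf_succ_le {S U : {S : Submodule K V // finrank K S = k}}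
    (hSU : S ≠ U) :
    ∃ W, (grassmannGraph K V k).Adj S W ∧
      finrank K ↥(S.1 ⊓ U.1) + 1 ≤ finrank K ↥(W.1 ⊓ U.1) := by
  obtain ⟨v, hvU, hvS⟩ : ∃ v ∈ U.1, v ∉ S.1 :=
    SetLike.not_le_iff_exists.mp fun hUS => hSU (eq_of_le hUS).symm
  have hlt := finrank_inf_lt hSU
  obtain ⟨H, hSUH, hHS, hH⟩ :=
    exists_le_le_finrank_eq (inf_le_left : S.1 ⊓ U.1 ≤ S.1) (m := k - 1) (by omega) (by omega)
  have hvH : v ∉ H := fun hv => hvS (hHS hv)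
  let W : {S : Submodule K V // finrank K S = k} :=
    ⟨H ⊔ K ∙ v, by rw [finrank_sup_span_singleton hvH, hH]; omega⟩
  have hSW : S ≠ W := fun h => hvS (h ▸ mem_sup_right (mem_span_singleton_self v))
  have hSW_dim : finrank K ↥(S.1 ⊓ W.1) = k - 1 :=
    le_antisymm (by have := finrank_inf_lt hSW; omega)
      (hH ▸ finrank_mono (le_inf hHS le_sup_left))
  have hvSU : v ∉ S.1 ⊓ U.1 := fun hv => hvS hv.1
  have hle : (S.1 ⊓ U.1) ⊔ K ∙ v ≤ W.1 ⊓ U.1 :=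
    sup_le (le_inf (hSUH.trans le_sup_left) inf_le_right)
      (le_inf le_sup_right ((span_singleton_le_iff_mem _ _).mpr hvU))
  exact ⟨W, ⟨hSW, hSW_dim⟩, finrank_sup_span_singleton hvSU ▸ finrank_mono hle⟩

theorem exists_walk_length_add_finrank_inf_le (S U : {S : Submodule K V // finrank K S = k}) :
    ∃ p : (grassmannGraph K V k).Walk S U, p.length + finrank K ↥(S.1 ⊓ U.1) ≤ k := by
  by_cases hSU : S = U
  · subst hSU
    exact ⟨.nil, by rw [inf_idem, S.2]; simp⟩
  obtain ⟨W, hSW, hWU⟩ := exists_adj_finrank_inf_succ_le hSU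
  obtain ⟨p, hp⟩ := exists_walk_length_add_finrank_inf_le W U
  exact ⟨.cons hSW p, by rw [Walk.length_cons]; omega⟩
termination_by k - finrank K ↥(S.1 ⊓ U.1)
decreasing_by have := finrank_inf_le W U; omega

theorem reachable (S U : {S : Submodule K V // finrank K S = k}) :
    (grassmannGraph K V k).Reachable S U :=
  (exists_walk_length_add_finrank_inf_le S U).elim fun p _ => ⟨p⟩

theorem dist_eq (S U : {S : Submodule K V // finrank K S = k}) :
    (grassmannGraph K V k).dist S U = k - finrank K ↥(S.1 ⊓ U.1) := by
  obtain ⟨p, hp⟩ := exists_walk_length_add_finrank_inf_le S U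
  obtain ⟨q, hq⟩ := (reachable S U).exists_walk_length_eq_dist
  have := le_finrank_inf_add_length q
  have := dist_le p
  omega

theorem connected (hk : k ≤ finrank K V) : (grassmannGraph K V k).Connected := by
  obtain ⟨S, -, -, hS⟩ := exists_le_le_finrank_eq (bot_le : ⊥ ≤ (⊤ : Submodule K V))
    (m := k) (by simp) (by rwa [finrank_top])
  have : Nonempty {S : Submodule K V // finrank K S = k} := ⟨⟨S, hS⟩⟩
  exact ⟨reachable⟩

end grassmannGraph

theorem grassmannGraph_connected_and_dist_general {K V : Type*} [DivisionRing K]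
    [AddCommGroup V] [Module K V] [FiniteDimensional K V] (n k : ℕ)
    (hn : Module.finrank K V = n) (hk2 : k ≤ n - 1) :
    (grassmannGraph K V k).Connected ∧
      ∀ S U : {S : Submodule K V // Module.finrank K S = k},
        (grassmannGraph K V k).dist S U = k - Module.finrank K ↥(S.1 ⊓ U.1) :=
  ⟨grassmannGraph.connected (by omega), grassmannGraph.dist_eq⟩

/-- For 1 ≤ k ≤ n-1, the Grassmann graph on G_k(V) is connected
and the distance between S and U equals k - dim(S ∩ U). -/
theorem grassmannGraph_connected_and_dist {K V : Type*} [DivisionRing K]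
    [AddCommGroup V] [Module K V] [FiniteDimensional K V] (n k : ℕ)
    (hn : Module.finrank K V = n) (hk1 : 1 ≤ k) (hk2 : k ≤ n - 1) :
    (grassmannGraph K V k).Connected ∧
      ∀ S U : {S : Submodule K V // Module.finrank K S = k},
        (grassmannGraph K V k).dist S U = k - Module.finrank K ↥(S.1 ⊓ U.1) :=
  grassmannGraph_connected_and_dist_general n k hn hk2
end

section
/- Let V be an n-dimensional vector space over a division ring with 1 < k < n-1, and suppose S₁, S₂ ∈ G_k(V) are adjacent (dim(S₁ ∩ S₂) = k-1). Then for every S ∈ G_k(V) \ {S₁, S₂} containing S₁ ∩ S₂ and contained in S₁ + S₂, every U ∈ G_k(V) opposite to S (i.e., at distance equal to the diameter min(k, n-k) from S) is opposite to S₁ or to S₂. -/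
open Module

section

variable {K V : Type*} [DivisionRing K] [AddCommGroup V] [Module K V] [FiniteDimensional K V]

namespace Submodule

theorem finrank_inf_add_finrank_le_finrank_inf_add_finrank (U : Submodule K V)
    {S T : Submodule K V} (hST : S ≤ T) :
    finrank K ↥(U ⊓ T) + finrank K S ≤ finrank K ↥(U ⊓ S) + finrank K T := by
  have hinf : U ⊓ T ⊓ S = U ⊓ S := by rw [inf_assoc, inf_eq_right.mpr hST]
  have hsup := finrank_mono (sup_le (inf_le_right : U ⊓ T ≤ T) hST)
  have := finrank_sup_add_finrank_inf_eq (U ⊓ T) S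
  rw [hinf] at this
  omega

theorem finrank_inf_le_or_of_inf_le_of_le_sup (U : Submodule K V) {A B S : Submodule K V}
    (hinf : A ⊓ B ≤ S) (hsup : S ≤ A ⊔ B) (hcodim : finrank K ↥(A ⊔ B) ≤ finrank K S + 1) :
    finrank K ↥(U ⊓ A) ≤ finrank K ↥(U ⊓ S) ∨ finrank K ↥(U ⊓ B) ≤ finrank K ↥(U ⊓ S) := by
  by_cases hB : U ⊓ B ≤ U ⊓ A
  · exact .inr <| finrank_mono <| le_inf inf_le_left <|
      (le_inf (hB.trans inf_le_right) inf_le_right).trans hinf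
  · have hlt := finrank_lt_finrank_of_lt (left_lt_sup.mpr hB)
    have hle := finrank_mono (sup_le (inf_le_inf_left U le_sup_left)
      (inf_le_inf_left U le_sup_right) : U ⊓ A ⊔ U ⊓ B ≤ U ⊓ (A ⊔ B))
    have := U.finrank_inf_add_finrank_le_finrank_inf_add_finrank hsup
    omega

theorem exists_le_le_finrank_eq_s8 {W A : Submodule K V} (hWA : W ≤ A) {m : ℕ}
    (hW : finrank K W ≤ m) (hA : m ≤ finrank K A) :
    ∃ H : Submodule K V, W ≤ H ∧ H ≤ A ∧ finrank K H = m := by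
  induction m with
  | zero => exact ⟨W, le_rfl, hWA, by omega⟩
  | succ m ih =>
    rcases hW.eq_or_lt with hW | hW
    · exact ⟨W, le_rfl, hWA, hW⟩
    obtain ⟨H, hWH, hHA, hH⟩ := ih (by omega) (by omega)
    obtain ⟨x, hxA, hxH⟩ := SetLike.exists_of_lt (lt_of_le_of_ne hHA (by rintro rfl; omega))
    refine ⟨H ⊔ K ∙ x, hWH.trans le_sup_left, sup_le hHA ((span_singleton_le_iff_mem x A).mpr hxA),
      ?_⟩
    rw [finrank_sup_span_singleton hxH, hH]

end Submodule

variable {k : ℕ}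

theorem grassmannGraph_eq_of_le_finrank_inf {A B : {S : Submodule K V // finrank K S = k}}
    (h : k ≤ finrank K ↥(A.1 ⊓ B.1)) : A = B := by
  have hA : A.1 ⊓ B.1 = A.1 := Submodule.eq_of_le_of_finrank_le inf_le_left (by rw [A.2]; exact h)
  exact Subtype.ext <| Submodule.eq_of_le_of_finrank_le (hA ▸ inf_le_right) (by rw [A.2, B.2])

theorem grassmannGraph_adj_finrank_sup {A B : {S : Submodule K V // finrank K S = k}}
    (h : (grassmannGraph K V k).Adj A B) : finrank K ↥(A.1 ⊔ B.1) = k + 1 := by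
  have hk : k ≠ 0 := fun hk => h.1 (grassmannGraph_eq_of_le_finrank_inf (by omega))
  have := Submodule.finrank_sup_add_finrank_inf_eq A.1 B.1
  rw [h.2, A.2, B.2] at this
  omega

theorem grassmannGraph_adj_finrank_inf_le {A C : {S : Submodule K V // finrank K S = k}}
    (h : (grassmannGraph K V k).Adj A C) (X : Submodule K V) :
    finrank K ↥(C.1 ⊓ X) ≤ finrank K ↥(A.1 ⊓ X) + 1 := by
  have hle := X.finrank_inf_add_finrank_le_finrank_inf_add_finrank (inf_le_right : A.1 ⊓ C.1 ≤ C.1)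
  have hmono := Submodule.finrank_mono
    (inf_le_inf_left X inf_le_left : X ⊓ (A.1 ⊓ C.1) ≤ X ⊓ A.1)
  rw [h.2, C.2, inf_comm X, inf_comm X] at *
  omega

theorem grassmannGraph_exists_adj_finrank_inf_lt {A B : {S : Submodule K V // finrank K S = k}}
    (hAB : A ≠ B) : ∃ A', (grassmannGraph K V k).Adj A A' ∧
      finrank K ↥(A.1 ⊓ B.1) < finrank K ↥(A'.1 ⊓ B.1) := by
  have hlt : finrank K ↥(A.1 ⊓ B.1) < k :=
    lt_of_not_ge fun h => hAB (grassmannGraph_eq_of_le_finrank_inf h)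
  obtain ⟨v, hvB, hvA⟩ : ∃ v ∈ B.1, v ∉ A.1 := SetLike.not_le_iff_exists.mp fun hBA =>
    hAB (grassmannGraph_eq_of_le_finrank_inf (by rw [inf_eq_right.mpr hBA, B.2]))
  obtain ⟨H, hWH, hHA, hH⟩ :=
    Submodule.exists_le_le_finrank_eq_s8 (inf_le_left : A.1 ⊓ B.1 ≤ A.1) (m := k - 1)
      (by omega) (by omega)
  have hvH : v ∉ H := fun h => hvA (hHA h)
  have hv : v ∈ H ⊔ K ∙ v := Submodule.mem_sup_right (Submodule.mem_span_singleton_self v)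
  have hA' : finrank K ↥(H ⊔ K ∙ v) = k := by
    rw [Submodule.finrank_sup_span_singleton hvH, hH]; omega
  refine ⟨⟨H ⊔ K ∙ v, hA'⟩, ⟨fun h => hvA (h ▸ hv), ?_⟩, ?_⟩
  · have hge := Submodule.finrank_mono (le_inf hHA le_sup_left : H ≤ A.1 ⊓ (H ⊔ K ∙ v))
    have hlt' := Submodule.finrank_lt_finrank_of_lt
      (lt_of_le_of_ne (inf_le_right : A.1 ⊓ (H ⊔ K ∙ v) ≤ H ⊔ K ∙ v)
        fun h => hvA ((h ▸ inf_le_left : H ⊔ K ∙ v ≤ A.1) hv))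
    dsimp only
    omega
  · have hle : A.1 ⊓ B.1 ⊔ K ∙ v ≤ (H ⊔ K ∙ v) ⊓ B.1 :=
      le_inf (sup_le_sup_right hWH _)
        (sup_le inf_le_right ((Submodule.span_singleton_le_iff_mem v B.1).mpr hvB))
    have := Submodule.finrank_mono hle
    rwa [Submodule.finrank_sup_span_singleton fun h : v ∈ A.1 ⊓ B.1 => hvA h.1] at this

theorem grassmannGraph_exists_walk_length_le (d : ℕ) {A B : {S : Submodule K V // finrank K S = k}}
    (h : k ≤ finrank K ↥(A.1 ⊓ B.1) + d) :
    ∃ p : (grassmannGraph K V k).Walk A B, p.length ≤ d := by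
  induction d generalizing A with
  | zero =>
    cases grassmannGraph_eq_of_le_finrank_inf h
    exact ⟨.nil, le_rfl⟩
  | succ d ih =>
    by_cases hAB : A = B
    · subst hAB
      exact ⟨.nil, by simp⟩
    obtain ⟨A', hadj, hlt⟩ := grassmannGraph_exists_adj_finrank_inf_lt hAB
    obtain ⟨q, hq⟩ := ih (A := A') (by omega)
    exact ⟨.cons hadj q, by simpa using hq⟩

theorem grassmannGraph_le_finrank_inf_add_length {A B : {S : Submodule K V // finrank K S = k}} :
    (p : (grassmannGraph K V k).Walk A B) → k ≤ finrank K ↥(A.1 ⊓ B.1) + p.length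
  | .nil => by rw [inf_idem, A.2]; exact Nat.le_add_right k 0
  | .cons h q => by
    have := grassmannGraph_adj_finrank_inf_le h B.1
    have := grassmannGraph_le_finrank_inf_add_length q
    simp only [SimpleGraph.Walk.length_cons]
    omega

theorem grassmannGraph_dist_eq (A B : {S : Submodule K V // finrank K S = k}) :
    (grassmannGraph K V k).dist A B = k - finrank K ↥(A.1 ⊓ B.1) := by
  obtain ⟨p, hp⟩ :=
    grassmannGraph_exists_walk_length_le (A := A) (B := B) (k - finrank K ↥(A.1 ⊓ B.1)) (by omega)
  obtain ⟨q, hq⟩ := SimpleGraph.Reachable.exists_walk_length_eq_dist ⟨p⟩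
  have := (grassmannGraph K V k).dist_le p
  have := grassmannGraph_le_finrank_inf_add_length q
  omega

theorem grassmannGraph_dist_le_min (A B : {S : Submodule K V // finrank K S = k}) :
    (grassmannGraph K V k).dist A B ≤ min k (finrank K V - k) := by
  have := Submodule.finrank_sup_add_finrank_inf_eq A.1 B.1
  have := Submodule.finrank_le (A.1 ⊔ B.1)
  rw [grassmannGraph_dist_eq, A.2, B.2] at *
  omega

end

theorem grassmann_line_opposite_general {K V : Type*} [DivisionRing K]
    [AddCommGroup V] [Module K V] [FiniteDimensional K V] (n k : ℕ)
    (hn : Module.finrank K V = n)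
    (S₁ S₂ S : {S : Submodule K V // Module.finrank K S = k})
    (hadj : (grassmannGraph K V k).Adj S₁ S₂)
    (hinf : S₁.1 ⊓ S₂.1 ≤ S.1) (hsup : S.1 ≤ S₁.1 ⊔ S₂.1) :
    ∀ U : {S : Submodule K V // Module.finrank K S = k},
      (grassmannGraph K V k).dist U S = min k (n - k) →
      (grassmannGraph K V k).dist U S₁ = min k (n - k) ∨
      (grassmannGraph K V k).dist U S₂ = min k (n - k) := by
  intro U hU
  subst hn
  have opposite_of_finrank_inf_le : ∀ T : {S : Submodule K V // finrank K S = k},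
      finrank K ↥(U.1 ⊓ T.1) ≤ finrank K ↥(U.1 ⊓ S.1) →
      (grassmannGraph K V k).dist U T = min k (finrank K V - k) := fun T hT => by
    have := grassmannGraph_dist_le_min U T
    rw [grassmannGraph_dist_eq] at hU this ⊢
    omega
  have hcodim : finrank K ↥(S₁.1 ⊔ S₂.1) ≤ finrank K S.1 + 1 := by
    rw [grassmannGraph_adj_finrank_sup hadj, S.2]
  exact (U.1.finrank_inf_le_or_of_inf_le_of_le_sup hinf hsup hcodim).imp
    (opposite_of_finrank_inf_le S₁) (opposite_of_finrank_inf_le S₂)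

/-- If S₁, S₂ ∈ G_k(V) are adjacent, then for every S ∈ G_k(V),
distinct from S₁ and S₂, with S₁ ∩ S₂ ⊆ S ⊆ S₁ + S₂, every U ∈ G_k(V) opposite
to S (at distance min(k, n-k), the diameter) is opposite to S₁ or to S₂. -/
theorem grassmann_line_opposite {K V : Type*} [DivisionRing K]
    [AddCommGroup V] [Module K V] [FiniteDimensional K V] (n k : ℕ)
    (hn : Module.finrank K V = n) (hk1 : 1 < k) (hk2 : k < n - 1)
    (S₁ S₂ S : {S : Submodule K V // Module.finrank K S = k})
    (hadj : (grassmannGraph K V k).Adj S₁ S₂)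
    (hS1 : S ≠ S₁) (hS2 : S ≠ S₂)
    (hinf : S₁.1 ⊓ S₂.1 ≤ S.1) (hsup : S.1 ≤ S₁.1 ⊔ S₂.1) :
    ∀ U : {S : Submodule K V // Module.finrank K S = k},
      (grassmannGraph K V k).dist U S = min k (n - k) →
      (grassmannGraph K V k).dist U S₁ = min k (n - k) ∨
      (grassmannGraph K V k).dist U S₂ = min k (n - k) :=
  grassmann_line_opposite_general n k hn S₁ S₂ S hadj hinf hsup
end
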